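/- For the SAT Hamiltonian H_𝒞 and any x ∈ {0,1}^n, every off-diagonal entry of H_𝒞(x) = W(x0^l) H_𝒞 W(x0^l)† in the computational basis is nonnegative, and every diagonal entry satisfies ⟨z y| H_𝒞(x) |z y⟩ ≥ ⟨1^n y| H_𝒞(x) |1^n y⟩ for all z ∈ {0,1}^n. -/
import Mathlib


open Finset

namespace Stmt16

/-- A literal of the 2-SAT formula: either an x-variable literal `aᵢ`/`¬aᵢ`
(`Sum.inl (i, pol)`) or a y-variable literal `bⱼ`/`¬bⱼ` (`Sum.inr (j, pol)`). -/
abbrev XLit (n l : ℕ) := (Fin n × Bool) ⊕ (Fin l × Bool)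

/-- The qubit on which a literal's operator acts. -/
def suppQ {n l : ℕ} : XLit n l → Fin n ⊕ Fin l
  | .inl (i, _) => .inl i
  | .inr (j, _) => .inr j

/-- The bit of a basis state at a given qubit. -/
def bit {n l : ℕ} (u : (Fin n → Bool) × (Fin l → Bool)) : Fin n ⊕ Fin l → Bool
  | .inl i => u.1 i
  | .inr j => u.2 j

/-- Entry of the single-qubit factor of `P(c)` after conjugating qubit `i ∈ [n]` by a
Hadamard iff `xpat i = true`; here `P(aᵢ) = X+I`, `P(¬aᵢ) = Z+I`, `P(bⱼ) = |0⟩⟨0|`,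
`P(¬bⱼ) = |1⟩⟨1|`, and `W(X+I)W = Z+I`. -/
def conjEntry {n l : ℕ} (xpat : Fin n → Bool) (c : XLit n l) (s t : Bool) : ℝ :=
  match c with
  | .inl (i, pol) =>
      if (if pol then xpat i else !(xpat i)) then
        (if s = t ∧ s = false then 2 else 0)
      else 1
  | .inr (_, pol) => if s = t ∧ s = (!pol) then 1 else 0

/-- Entry of the conjugated clause term `W(x0^l) P(c₁) ⊗ P(c₂) W(x0^l)†`. -/
def termEntry {n l : ℕ} (xpat : Fin n → Bool) (c₁ c₂ : XLit n l)
    (u v : (Fin n → Bool) × (Fin l → Bool)) : ℝ :=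
  conjEntry xpat c₁ (bit u (suppQ c₁)) (bit v (suppQ c₁)) *
  conjEntry xpat c₂ (bit u (suppQ c₂)) (bit v (suppQ c₂)) *
  (if ∀ q, q ≠ suppQ c₁ → q ≠ suppQ c₂ → bit u q = bit v q then 1 else 0)

/-- Entry of `H_𝒞(x) = W(x0^l) H_𝒞 W(x0^l)†` for the formula `𝒞` with clauses `C k`. -/
def HC {n l m : ℕ} (xpat : Fin n → Bool) (C : Fin m → XLit n l × XLit n l)
    (u v : (Fin n → Bool) × (Fin l → Bool)) : ℝ :=
  ∑ k, termEntry xpat (C k).1 (C k).2 u v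

/-- Truth value of a literal under the assignment `(x, y)`. -/
def evalXLit {n l : ℕ} (x : Fin n → Bool) (y : Fin l → Bool) : XLit n l → Bool
  | .inl (i, pol) => if pol then x i else !(x i)
  | .inr (j, pol) => if pol then y j else !(y j)



lemma conjEntry_nonneg {n l : ℕ} (xpat : Fin n → Bool) (c : XLit n l) (s t : Bool) :
    0 ≤ conjEntry xpat c s t := by
  rcases c with ⟨i, pol⟩ | ⟨j, pol⟩ <;> simp only [conjEntry] <;> split_ifs <;> norm_num

lemma termEntry_nonneg {n l : ℕ} (xpat : Fin n → Bool) (c₁ c₂ : XLit n l)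
    (u v : (Fin n → Bool) × (Fin l → Bool)) : 0 ≤ termEntry xpat c₁ c₂ u v := by
  unfold termEntry
  have h1 := conjEntry_nonneg xpat c₁ (bit u (suppQ c₁)) (bit v (suppQ c₁))
  have h2 := conjEntry_nonneg xpat c₂ (bit u (suppQ c₂)) (bit v (suppQ c₂))
  have h3 : (0:ℝ) ≤ (if ∀ q, q ≠ suppQ c₁ → q ≠ suppQ c₂ → bit u q = bit v q then 1 else 0) := by
    split_ifs <;> norm_num
  positivity

lemma diag_factor_le {n l : ℕ} (xpat : Fin n → Bool) (c : XLit n l)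
    (z : Fin n → Bool) (y : Fin l → Bool) :
    conjEntry xpat c (bit ((fun _ => true), y) (suppQ c)) (bit ((fun _ => true), y) (suppQ c)) ≤
    conjEntry xpat c (bit (z, y) (suppQ c)) (bit (z, y) (suppQ c)) := by
  rcases c with ⟨i, pol⟩ | ⟨j, pol⟩ <;>
    simp only [conjEntry, suppQ, bit] <;> split_ifs <;> simp_all <;> norm_num

/-- For the SAT Hamiltonian and any Hadamard pattern `x`, all off-diagonal entries of
`H_𝒞(x)` are nonnegative, and the diagonal entry at `|1ⁿ y⟩` is minimal among the
diagonal entries `⟨z y|H_𝒞(x)|z y⟩`. -/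
theorem sat_hamiltonian_offdiag_nonneg_and_diag_min {n l m : ℕ}
    (C : Fin m → XLit n l × XLit n l)
    (hdistinct : ∀ k, suppQ (C k).1 ≠ suppQ (C k).2) :
    ∀ x : Fin n → Bool,
      (∀ u v : (Fin n → Bool) × (Fin l → Bool), u ≠ v → 0 ≤ HC x C u v) ∧
      (∀ (z : Fin n → Bool) (y : Fin l → Bool),
        HC x C ((fun _ => true), y) ((fun _ => true), y) ≤ HC x C (z, y) (z, y)) := by
  intro x
  constructor
  · intro u v _
    exact Finset.sum_nonneg fun k _ => termEntry_nonneg x (C k).1 (C k).2 u v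
  · intro z y
    apply Finset.sum_le_sum
    intro k _
    unfold termEntry
    simp only [implies_true, if_true, mul_one]
    apply mul_le_mul (diag_factor_le x (C k).1 z y) (diag_factor_le x (C k).2 z y)
      (conjEntry_nonneg _ _ _ _)
    exact le_trans (conjEntry_nonneg _ _ _ _) (diag_factor_le x (C k).1 z y)


end Stmt16
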